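/- Fix an open set 𝒰 ⊆ E^∞. Say that a pair (x⃗, X) of a finite block sequence and a block subspace is good if II has a strategy in G_X(x⃗) to play in 𝒰; bad if for every block subspace Y ⊆ X the pair (x⃗, Y) is not good; and worse if it is bad and there exists n ∈ ℕ such that for every nonzero y ∈ X with n < y, the pair (x⃗⌢y, X) is bad. Then: if (x⃗, X) is bad, there is a block subspace Z ⊆ X such that (x⃗, Z) is worse. -/

import Mathlib

/-!
Enumerate `E` as `(v k)`. A fusion argument produces a block subspace `D ≤ X` such that
whenever `(l ⌢ v k, Y)` is good for some block subspace `Y ≤ D`, it is already good for the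
tail `D ⊓ beyond N` of vectors of `D` supported above some `N`. If no `Z ≤ X` were worse,
II could win `G_D(l)`: every block subspace of I's first move `Y₀` is bad for `l` but not
worse, so it contains some `v k` with `(l ⌢ v k, Y)` good for a `Y ≤ Y₀`; II plays `v k` and
continues with a winning strategy for `G_{D ⊓ beyond N}(l ⌢ v k)`, contradicting the badness
of `(l, X)`.
-/

section Defs

variable {𝔽 : Type} [Field 𝔽] {E : Type} [AddCommGroup E] [Module 𝔽 E]

/-- The support of a vector with respect to the basis `b`. -/
noncomputable def supp (b : Module.Basis ℕ 𝔽 E) (x : E) : Finset ℕ :=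
  (b.repr x).support

/-- `VecLt b x y` means `x < y`: every element of the support of `x` is smaller than
every element of the support of `y`. -/
def VecLt (b : Module.Basis ℕ 𝔽 E) (x y : E) : Prop :=
  ∀ m ∈ supp b x, ∀ n ∈ supp b y, m < n

/-- `NatLt b k x` means `k < x`: `k` is smaller than every element of the support of `x`. -/
def NatLt (b : Module.Basis ℕ 𝔽 E) (k : ℕ) (x : E) : Prop :=
  ∀ n ∈ supp b x, k < n

/-- An infinite block sequence: a sequence of nonzero vectors with `x n < x (n + 1)`. -/
def IsBlockSeq (b : Module.Basis ℕ 𝔽 E) (x : ℕ → E) : Prop :=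
  (∀ n, x n ≠ 0) ∧ ∀ n, VecLt b (x n) (x (n + 1))

/-- A finite block sequence: a list of nonzero vectors, consecutively increasing in the
block ordering. -/
def IsFinBlockSeq (b : Module.Basis ℕ 𝔽 E) (l : List E) : Prop :=
  (∀ x ∈ l, x ≠ 0) ∧ l.Chain' (VecLt b)

/-- A block subspace: a subspace spanned by an infinite block sequence. -/
def IsBlockSubspace (b : Module.Basis ℕ 𝔽 E) (X : Submodule 𝔽 E) : Prop :=
  ∃ y : ℕ → E, IsBlockSeq b y ∧ X = Submodule.span 𝔽 (Set.range y)

/-- The list of the first `n` values of a sequence. -/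
def hist {α : Type _} (x : ℕ → α) (n : ℕ) : List α :=
  List.ofFn (fun j : Fin n => x j)

/-- The concatenation of a finite prefix with an infinite sequence. -/
def prefCat {α : Type _} (l : List α) (x : ℕ → α) : ℕ → α := fun n =>
  if h : n < l.length then l.get ⟨n, h⟩ else x (n - l.length)

/-- Player II has a strategy in Gowers' game `G_X(pre)` below `X` to play in `A`:
player I plays infinite-dimensional subspaces `Y i ≤ X`, player II answers with a
nonzero vector of `Y i`, the vectors played by II forming a block sequence, and the
outcome (the prefix `pre` followed by II's vectors) lies in `A`. -/
def IIWinsG (b : Module.Basis ℕ 𝔽 E) (X : Submodule 𝔽 E) (pre : List E) (A : Set (ℕ → E)) :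
    Prop :=
  ∃ σ : List (Submodule 𝔽 E) → E,
    ∀ Y : ℕ → Submodule 𝔽 E,
      (∀ i, Y i ≤ X ∧ ¬FiniteDimensional 𝔽 ↥(Y i)) →
      (∀ i, σ (hist Y (i + 1)) ∈ Y i ∧ σ (hist Y (i + 1)) ≠ 0 ∧
          VecLt b (σ (hist Y (i + 1))) (σ (hist Y (i + 2)))) ∧
        prefCat pre (fun i => σ (hist Y (i + 1))) ∈ A

/-- Player I has a strategy in the infinite asymptotic game `F_X(pre)` below `X` to play
in `A`: player I plays strictly increasing natural numbers `n i`, player II answers with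
nonzero vectors of `X` with `n i < x i` forming a block sequence, and the outcome
(the prefix `pre` followed by II's vectors) lies in `A`. -/
def IWinsF (b : Module.Basis ℕ 𝔽 E) (X : Submodule 𝔽 E) (pre : List E) (A : Set (ℕ → E)) :
    Prop :=
  ∃ σ : List E → ℕ,
    ∀ x : ℕ → E,
      (∀ i, x i ∈ X ∧ x i ≠ 0 ∧ NatLt b (σ (hist x i)) (x i) ∧
          VecLt b (x i) (x (i + 1))) →
      (∀ i, σ (hist x i) < σ (hist x (i + 1))) ∧ prefCat pre x ∈ A

/-- A set `A ⊆ E^∞` is strategically Ramsey if for every block subspace `V` and every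
finite block sequence `z`, there is a block subspace `W ≤ V` such that either II has a
strategy in `G_W(z)` to play in `A`, or I has a strategy in `F_W(z)` to play in `Aᶜ`. -/
def StrategicallyRamsey (b : Module.Basis ℕ 𝔽 E) (A : Set (ℕ → E)) : Prop :=
  ∀ V : Submodule 𝔽 E, IsBlockSubspace b V → ∀ z : List E, IsFinBlockSeq b z →
    ∃ W : Submodule 𝔽 E, W ≤ V ∧ IsBlockSubspace b W ∧
      (IIWinsG b W z A ∨ IWinsF b W z Aᶜ)

end Defs

open Submodule

section Blocks

variable {𝔽 : Type} [Field 𝔽] {E : Type} [AddCommGroup E] [Module 𝔽 E]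
  (b : Module.Basis ℕ 𝔽 E)

theorem supp_nonempty {x : E} (hx : x ≠ 0) : (supp b x).Nonempty := by
  simpa [supp, Finset.nonempty_iff_ne_empty] using hx

noncomputable def maxSupp (x : E) : ℕ :=
  (supp b x).sup id

theorem le_maxSupp {x : E} {n : ℕ} (hn : n ∈ supp b x) : n ≤ maxSupp b x :=
  Finset.le_sup (f := id) hn

theorem vecLt_of_natLt_maxSupp {x y : E} (h : NatLt b (maxSupp b x) y) : VecLt b x y :=
  fun _ hm _ hn => (le_maxSupp b hm).trans_lt (h _ hn)

theorem VecLt.trans {x y z : E} (hy : y ≠ 0) (hxy : VecLt b x y) (hyz : VecLt b y z) :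
    VecLt b x z := by
  intro m hm n hn
  obtain ⟨p, hp⟩ := supp_nonempty b hy
  exact (hxy m hm p hp).trans (hyz p hp n hn)

theorem IsBlockSeq.vecLt_of_lt {w : ℕ → E} (hw : IsBlockSeq b w) {i j : ℕ} (hij : i < j) :
    VecLt b (w i) (w j) := by
  induction j, hij using Nat.le_induction with
  | base => exact hw.2 i
  | succ j _ ih => exact VecLt.trans b (hw.1 j) ih (hw.2 j)

theorem IsBlockSeq.le_of_mem_supp {w : ℕ → E} (hw : IsBlockSeq b w) {j n : ℕ}
    (hn : n ∈ supp b (w j)) : j ≤ n := by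
  induction j generalizing n with
  | zero => exact n.zero_le
  | succ j ih =>
    obtain ⟨p, hp⟩ := supp_nonempty b (hw.1 j)
    exact (ih hp).trans_lt (hw.2 j p hp n hn)

theorem IsBlockSeq.notMem_supp_of_ne {w : ℕ → E} (hw : IsBlockSeq b w) {i j n : ℕ} (hij : i ≠ j)
    (hn : n ∈ supp b (w j)) : n ∉ supp b (w i) := fun hn' =>
  hij.lt_or_gt.elim (fun h => (hw.vecLt_of_lt b h n hn' n hn).false)
    (fun h => (hw.vecLt_of_lt b h n hn n hn').false)

theorem IsBlockSeq.repr_sum_apply {w : ℕ → E} (hw : IsBlockSeq b w) (c : ℕ →₀ 𝔽) {j n : ℕ}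
    (hn : n ∈ supp b (w j)) :
    b.repr (c.sum fun i a => a • w i) n = c j * b.repr (w j) n := by
  rw [map_finsuppSum, Finsupp.sum_apply, Finsupp.sum_eq_single j]
  · simp
  · intro i _ hij
    simp [Finsupp.notMem_support_iff.mp (hw.notMem_supp_of_ne b hij hn)]
  · simp

def beyond (N : ℕ) : Submodule 𝔽 E where
  carrier := {x | NatLt b N x}
  add_mem' {x y} hx hy n hn := by
    rw [supp, map_add] at hn
    exact (Finset.mem_union.mp (Finsupp.support_add hn)).elim (hx n) (hy n)
  zero_mem' n hn := by simp [supp] at hn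
  smul_mem' c x hx n hn := by
    rw [supp, map_smul] at hn
    exact hx n (Finsupp.support_smul hn)

theorem mem_beyond {N : ℕ} {x : E} : x ∈ beyond b N ↔ NatLt b N x := Iff.rfl

theorem beyond_antitone : Antitone (beyond b) :=
  fun _ _ hMN _ hx n hn => hMN.trans_lt (hx n hn)

noncomputable def initialCoords (N : ℕ) : E →ₗ[𝔽] Fin (N + 1) → 𝔽 :=
  LinearMap.pi fun i => b.coord i

theorem ker_initialCoords (N : ℕ) : LinearMap.ker (initialCoords b N) = beyond b N := by
  ext x
  simp only [LinearMap.mem_ker, initialCoords, funext_iff, LinearMap.pi_apply,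
    Module.Basis.coord_apply, Pi.zero_apply, mem_beyond, NatLt, supp, Finsupp.mem_support_iff]
  refine ⟨fun h n hn => ?_, fun h i => ?_⟩
  · by_contra hle
    exact hn (h ⟨n, by omega⟩)
  · by_contra hi
    have := h i hi
    omega

theorem not_finiteDimensional_inf_beyond {W : Submodule 𝔽 E} (hW : ¬FiniteDimensional 𝔽 W)
    (N : ℕ) : ¬FiniteDimensional 𝔽 ↥(W ⊓ beyond b N) := by
  simp only [← fg_iff_finiteDimensional] at hW ⊢
  rw [← ker_initialCoords]
  exact fun h => hW (fg_of_fg_map_of_fg_inf_ker _ (IsNoetherian.noetherian _) h)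

theorem exists_ne_zero_natLt_of_not_finiteDimensional {W : Submodule 𝔽 E}
    (hW : ¬FiniteDimensional 𝔽 W) (N : ℕ) : ∃ x ∈ W, x ≠ 0 ∧ NatLt b N x := by
  obtain ⟨x, hx, hx0⟩ := (W ⊓ beyond b N).ne_bot_iff.mp fun h =>
    not_finiteDimensional_inf_beyond b hW N (h ▸ inferInstance)
  exact ⟨x, (mem_inf.mp hx).1, hx0, (mem_inf.mp hx).2⟩

theorem exists_blockSeq_forall_mem (S : ℕ → Submodule 𝔽 E)
    (hS : ∀ k N, ∃ x ∈ S k, x ≠ 0 ∧ NatLt b N x) :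
    ∃ w, IsBlockSeq b w ∧ ∀ k, w k ∈ S k := by
  choose f hfS hf0 hflt using hS
  let w : ℕ → E := fun k => Nat.rec (f 0 0) (fun k x => f (k + 1) (maxSupp b x)) k
  refine ⟨w, ⟨fun k => ?_, fun k => vecLt_of_natLt_maxSupp b (hflt _ _)⟩, fun k => ?_⟩
  · cases k <;> exact hf0 _ _
  · cases k <;> exact hfS _ _

theorem exists_blockSubspace_le (S : Submodule 𝔽 E)
    (hS : ∀ N, ∃ x ∈ S, x ≠ 0 ∧ NatLt b N x) : ∃ B, IsBlockSubspace b B ∧ B ≤ S := by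
  obtain ⟨w, hw, hwS⟩ := exists_blockSeq_forall_mem b (fun _ => S) fun _ => hS
  exact ⟨span 𝔽 (Set.range w), ⟨w, hw, rfl⟩, span_le.mpr (Set.range_subset_iff.mpr hwS)⟩

theorem IsBlockSubspace.exists_ne_zero_natLt {W : Submodule 𝔽 E} (hW : IsBlockSubspace b W)
    (N : ℕ) : ∃ x ∈ W, x ≠ 0 ∧ NatLt b N x := by
  obtain ⟨w, hw, rfl⟩ := hW
  exact ⟨w (N + 1), subset_span ⟨N + 1, rfl⟩, hw.1 _,
    fun n hn => (hw.le_of_mem_supp b hn).trans_lt' N.lt_succ_self⟩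

theorem IsBlockSubspace.exists_le_beyond {W : Submodule 𝔽 E} (hW : IsBlockSubspace b W)
    (N : ℕ) : ∃ Z, IsBlockSubspace b Z ∧ Z ≤ W ⊓ beyond b N :=
  exists_blockSubspace_le b _ fun M => by
    obtain ⟨x, hx, hx0, hxM⟩ := hW.exists_ne_zero_natLt b (max N M)
    exact ⟨x, mem_inf.mpr ⟨hx, beyond_antitone b (le_max_left N M) hxM⟩, hx0,
      fun n hn => (le_max_right N M).trans_lt (hxM n hn)⟩

theorem IsBlockSeq.span_inf_beyond_le {w : ℕ → E} (hw : IsBlockSeq b w) (k : ℕ) :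
    span 𝔽 (Set.range w) ⊓ beyond b (maxSupp b (w k)) ≤ span 𝔽 (w '' Set.Ioi k) := by
  rintro x ⟨hx, hxN⟩
  obtain ⟨c, rfl⟩ := Finsupp.mem_span_range_iff_exists_finsupp.mp hx
  have hc : ∀ j ∈ c.support, k < j := by
    intro j hj
    by_contra! hjk
    obtain ⟨n, hn⟩ := supp_nonempty b (hw.1 j)
    have hnk : n ≤ maxSupp b (w k) := by
      rcases hjk.lt_or_eq with hjk | rfl
      · obtain ⟨m, hm⟩ := supp_nonempty b (hw.1 k)
        exact (hw.vecLt_of_lt b hjk n hn m hm).le.trans (le_maxSupp b hm)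
      · exact le_maxSupp b hn
    have hxn : b.repr (c.sum fun i a => a • w i) n = 0 :=
      Finsupp.notMem_support_iff.mp fun h => (hxN n h).not_ge hnk
    rw [hw.repr_sum_apply b c hn] at hxn
    exact Finsupp.mem_support_iff.mp hj
      ((mul_eq_zero.mp hxn).resolve_right (Finsupp.mem_support_iff.mp hn))
  exact sum_mem fun j hj => smul_mem _ _ (subset_span ⟨j, hc j hj, rfl⟩)

theorem exists_blockSubspace_diagonal (P : ℕ → Submodule 𝔽 E → Prop)
    (hP : ∀ k {Y Z}, Y ≤ Z → P k Z → P k Y) {X : Submodule 𝔽 E} (hX : IsBlockSubspace b X) :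
    ∃ D, IsBlockSubspace b D ∧ D ≤ X ∧ ∀ k Y, IsBlockSubspace b Y → Y ≤ D → P k Y →
      ∃ N, P k (D ⊓ beyond b N) := by
  classical
  have hstep : ∀ k (Z : Submodule 𝔽 E), ∃ Z' ≤ Z, (IsBlockSubspace b Z → IsBlockSubspace b Z') ∧
      ((∃ Y ≤ Z, IsBlockSubspace b Y ∧ P k Y) → P k Z') := fun k Z => by
    by_cases h : ∃ Y ≤ Z, IsBlockSubspace b Y ∧ P k Y
    · obtain ⟨Y, hYZ, hY, hPY⟩ := h
      exact ⟨Y, hYZ, fun _ => hY, fun _ => hPY⟩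
    · exact ⟨Z, le_rfl, id, fun h' => absurd h' h⟩
  choose g hg_le hg_block hg_P using hstep
  let W : ℕ → Submodule 𝔽 E := fun k => Nat.rec X (fun k Z => g k Z) k
  have hW_anti : Antitone W := antitone_nat_of_succ_le fun k => hg_le k (W k)
  have hW_block : ∀ k, IsBlockSubspace b (W k) := fun k => by
    induction k with
    | zero => exact hX
    | succ k ih => exact hg_block k (W k) ih
  obtain ⟨w, hw, hwW⟩ := exists_blockSeq_forall_mem b W
    fun k N => (hW_block k).exists_ne_zero_natLt b N
  refine ⟨span 𝔽 (Set.range w), ⟨w, hw, rfl⟩,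
    span_le.mpr (Set.range_subset_iff.mpr fun k => hW_anti k.zero_le (hwW k)), ?_⟩
  intro k Y hY hYD hPY
  have htail : span 𝔽 (Set.range w) ⊓ beyond b (maxSupp b (w k)) ≤ W (k + 1) :=
    (hw.span_inf_beyond_le b k).trans <| span_le.mpr <| by
      rintro _ ⟨j, hkj, rfl⟩
      exact hW_anti (Nat.succ_le_of_lt hkj) (hwW j)
  obtain ⟨Z, hZ, hZY⟩ := hY.exists_le_beyond b (maxSupp b (w k))
  have hZW : Z ≤ W k :=
    hZY.trans ((inf_le_inf_right _ hYD).trans (htail.trans (hg_le k (W k))))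
  exact ⟨_, hP k htail (hg_P k (W k) ⟨Z, hZW, hZ, hP k (hZY.trans inf_le_left) hPY⟩)⟩

end Blocks

section Games

variable {𝔽 : Type} [Field 𝔽] {E : Type} [AddCommGroup E] [Module 𝔽 E]
  (b : Module.Basis ℕ 𝔽 E)

theorem IIWinsG.mono {Y Z : Submodule 𝔽 E} {pre : List E} {A : Set (ℕ → E)} (hYZ : Y ≤ Z)
    (hZ : IIWinsG b Z pre A) : IIWinsG b Y pre A := by
  obtain ⟨σ, hσ⟩ := hZ
  exact ⟨σ, fun Ys hYs => hσ Ys fun i => ⟨(hYs i).1.trans hYZ, (hYs i).2⟩⟩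

theorem prefCat_append_singleton {α : Type _} (l : List α) (x : ℕ → α) :
    prefCat (l ++ [x 0]) (fun i => x (i + 1)) = prefCat l x := by
  funext n
  simp only [prefCat, List.length_append, List.length_singleton, List.get_eq_getElem]
  rcases lt_trichotomy n l.length with h | rfl | h
  · rw [dif_pos (by omega), dif_pos h, List.getElem_append_left h]
  · simp
  · rw [dif_neg (by omega), dif_neg (by omega)]
    congr 1
    omega

noncomputable def gluedStrategy (y : Submodule 𝔽 E → E) (N : Submodule 𝔽 E → ℕ)
    (τ : Submodule 𝔽 E → List (Submodule 𝔽 E) → E) : List (Submodule 𝔽 E) → E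
  | [] => 0
  | [Y₀] => y Y₀
  | Y₀ :: Y₁ :: Ys => τ Y₀ ((Y₁ :: Ys).map (· ⊓ beyond b (N Y₀)))

theorem gluedStrategy_hist_one (y : Submodule 𝔽 E → E) (N : Submodule 𝔽 E → ℕ)
    (τ : Submodule 𝔽 E → List (Submodule 𝔽 E) → E) (Y : ℕ → Submodule 𝔽 E) :
    gluedStrategy b y N τ (hist Y 1) = y (Y 0) := by
  simp [hist, gluedStrategy]

theorem gluedStrategy_hist_add_two (y : Submodule 𝔽 E → E) (N : Submodule 𝔽 E → ℕ)
    (τ : Submodule 𝔽 E → List (Submodule 𝔽 E) → E) (Y : ℕ → Submodule 𝔽 E) (i : ℕ) :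
    gluedStrategy b y N τ (hist Y (i + 2)) =
      τ (Y 0) (hist (fun j => Y (j + 1) ⊓ beyond b (N (Y 0))) (i + 1)) := by
  simp [hist, gluedStrategy, List.ofFn_succ, List.map_ofFn, Function.comp_def]

theorem IIWinsG.of_forall_exists_first_move {V : Submodule 𝔽 E} {pre : List E}
    {A : Set (ℕ → E)}
    (h : ∀ Y₀ ≤ V, ¬FiniteDimensional 𝔽 Y₀ → ∃ y ∈ Y₀, y ≠ 0 ∧
      ∃ N, maxSupp b y ≤ N ∧ IIWinsG b (V ⊓ beyond b N) (pre ++ [y]) A) :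
    IIWinsG b V pre A := by
  choose! y hyY hy0 N hyN τ hτ using h
  refine ⟨gluedStrategy b y N τ, fun Y hY => ?_⟩
  obtain ⟨hY0V, hY0⟩ := hY 0
  set Y' : ℕ → Submodule 𝔽 E := fun j => Y (j + 1) ⊓ beyond b (N (Y 0))
  have hY' : ∀ j, Y' j ≤ V ⊓ beyond b (N (Y 0)) ∧ ¬FiniteDimensional 𝔽 (Y' j) := fun j =>
    ⟨inf_le_inf_right _ (hY (j + 1)).1, not_finiteDimensional_inf_beyond b (hY (j + 1)).2 _⟩
  obtain ⟨hmoves, hout⟩ := hτ (Y 0) hY0V hY0 Y' hY'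
  refine ⟨fun i => ?_, ?_⟩
  · cases i with
    | zero =>
      rw [gluedStrategy_hist_one, gluedStrategy_hist_add_two]
      refine ⟨hyY _ hY0V hY0, hy0 _ hY0V hY0, fun m hm n hn => ?_⟩
      exact ((le_maxSupp b hm).trans (hyN _ hY0V hY0)).trans_lt
        ((inf_le_right : Y' 0 ≤ _) (hmoves 0).1 n hn)
    | succ i =>
      rw [gluedStrategy_hist_add_two, gluedStrategy_hist_add_two]
      exact ⟨inf_le_left (a := Y (i + 1)) (hmoves i).1, (hmoves i).2⟩
  · rw [← prefCat_append_singleton]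
    simpa only [zero_add, gluedStrategy_hist_one, gluedStrategy_hist_add_two] using hout

end Games

theorem bad_to_worse_general
    {𝔽 : Type} [Field 𝔽] [Countable 𝔽]
    {E : Type} [AddCommGroup E] [Module 𝔽 E]
    (b : Module.Basis ℕ 𝔽 E) (U : Set (ℕ → E))
    (l : List E)
    (X : Submodule 𝔽 E) (hX : IsBlockSubspace b X)
    (hbad : ∀ Y : Submodule 𝔽 E, IsBlockSubspace b Y → Y ≤ X → ¬IIWinsG b Y l U) :
    ∃ Z : Submodule 𝔽 E, IsBlockSubspace b Z ∧ Z ≤ X ∧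
      (∀ Y : Submodule 𝔽 E, IsBlockSubspace b Y → Y ≤ Z → ¬IIWinsG b Y l U) ∧
      ∃ n : ℕ, ∀ y : E, y ∈ Z → y ≠ 0 → NatLt b n y →
        ∀ Y : Submodule 𝔽 E, IsBlockSubspace b Y → Y ≤ Z →
          ¬IIWinsG b Y (l ++ [y]) U := by
  by_contra! hnot_worse
  have : Countable E := Countable.of_equiv _ b.repr.toEquiv.symm
  obtain ⟨v, hv⟩ := exists_surjective_nat E
  obtain ⟨D, hD, hDX, hdiag⟩ := exists_blockSubspace_diagonal b
    (fun k Z => IIWinsG b Z (l ++ [v k]) U) (fun _ _ _ => IIWinsG.mono b) hX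
  refine hbad D hD hDX (IIWinsG.of_forall_exists_first_move b fun Y₀ hY₀D hY₀ => ?_)
  obtain ⟨B, hB, hBY₀⟩ := exists_blockSubspace_le b Y₀
    (exists_ne_zero_natLt_of_not_finiteDimensional b hY₀)
  have hBX : B ≤ X := hBY₀.trans (hY₀D.trans hDX)
  obtain ⟨y, hyB, hy0, -, Y, hY, hYB, hYwins⟩ :=
    hnot_worse B hB hBX (fun Y hY hYB => hbad Y hY (hYB.trans hBX)) 0
  obtain ⟨k, rfl⟩ := hv y
  obtain ⟨N, hN⟩ := hdiag k Y hY (hYB.trans (hBY₀.trans hY₀D)) hYwins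
  exact ⟨v k, hBY₀ hyB, hy0, max N (maxSupp b (v k)), le_max_right _ _,
    hN.mono b (inf_le_inf_left _ (beyond_antitone b (le_max_left _ _)))⟩

theorem bad_to_worse
    {𝔽 : Type} [Field 𝔽] [Countable 𝔽]
    {E : Type} [AddCommGroup E] [Module 𝔽 E]
    [TopologicalSpace E] [DiscreteTopology E]
    (b : Module.Basis ℕ 𝔽 E) (U : Set (ℕ → E)) (hU : IsOpen U)
    (l : List E) (hl : IsFinBlockSeq b l)
    (X : Submodule 𝔽 E) (hX : IsBlockSubspace b X)
    (hbad : ∀ Y : Submodule 𝔽 E, IsBlockSubspace b Y → Y ≤ X → ¬IIWinsG b Y l U) :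
    ∃ Z : Submodule 𝔽 E, IsBlockSubspace b Z ∧ Z ≤ X ∧
      (∀ Y : Submodule 𝔽 E, IsBlockSubspace b Y → Y ≤ Z → ¬IIWinsG b Y l U) ∧
      ∃ n : ℕ, ∀ y : E, y ∈ Z → y ≠ 0 → NatLt b n y →
        ∀ Y : Submodule 𝔽 E, IsBlockSubspace b Y → Y ≤ Z →
          ¬IIWinsG b Y (l ++ [y]) U :=
  bad_to_worse_general b U l X hX hbad
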